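/- arXiv:2510.17740 — 4 statements merged into one kernel-verified Lean document; each statement's English description precedes it below -/
import Mathlib

section
/- Let v₁ ≠ v₂ ∈ ℝⁿ be unit vectors with 1 − (v₁ᵀ v₂)² ≤ c·λ for some λ ∈ (0,1] and c ≥ 1. Define Mᵢ = I − (1 − λ)·vᵢ vᵢᵀ for i ∈ {1,2}. Then (1/(3c))·M₁ ⪯ M₂ ⪯ 3c·M₁ in the Loewner order. -/
/-!
Write `qᵥ(x) = xᵀx - (1-λ)(vᵀx)² = |x - (vᵀx)v|² + λ(vᵀx)²` for the quadratic form of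
`I - (1-λ)vvᵀ`. The distance from `x` to the line `ℝv₂` is at most its distance to `ℝv₁` plus
`|v₁ᵀx|` times the distance from `v₁` to `ℝv₂`, which is `√(1 - (v₁ᵀv₂)²) ≤ √(cλ)`; squaring,
`|x - (v₂ᵀx)v₂|² ≤ 2|x - (v₁ᵀx)v₁|² + 2cλ(v₁ᵀx)²`. Together with `λ(v₂ᵀx)² ≤ λ|x|²` this gives
`q_{v₂} ≤ 3c·q_{v₁}`, and by symmetry `q_{v₁} ≤ 3c·q_{v₂}`.
-/

open Matrix

section DotProduct

variable {ι : Type*} [Fintype ι]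

theorem real_dotProduct_self_nonneg (x : ι → ℝ) : 0 ≤ x ⬝ᵥ x := by
  simpa using dotProduct_star_self_nonneg x

theorem add_dotProduct_add_self_le (u w : ι → ℝ) :
    (u + w) ⬝ᵥ (u + w) ≤ 2 * (u ⬝ᵥ u) + 2 * (w ⬝ᵥ w) := by
  have h := real_dotProduct_self_nonneg (u - w)
  simp only [add_dotProduct, dotProduct_add, sub_dotProduct, dotProduct_sub,
    dotProduct_comm w u] at h ⊢
  linarith

theorem sub_smul_dotProduct_sub_smul {v : ι → ℝ} (hv : v ⬝ᵥ v = 1) (x : ι → ℝ) (s : ℝ) :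
    (x - s • v) ⬝ᵥ (x - s • v) = x ⬝ᵥ x - (v ⬝ᵥ x) ^ 2 + (v ⬝ᵥ x - s) ^ 2 := by
  simp only [sub_dotProduct, dotProduct_sub, smul_dotProduct, dotProduct_smul, smul_eq_mul, hv,
    dotProduct_comm x v]
  ring

theorem sq_dotProduct_le_dotProduct_self {v : ι → ℝ} (hv : v ⬝ᵥ v = 1) (x : ι → ℝ) :
    (v ⬝ᵥ x) ^ 2 ≤ x ⬝ᵥ x := by
  have h := sub_smul_dotProduct_sub_smul hv x (v ⬝ᵥ x)
  rw [sub_self] at h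
  nlinarith [real_dotProduct_self_nonneg (x - (v ⬝ᵥ x) • v)]

theorem dotProduct_self_sub_sq_le {v₁ v₂ : ι → ℝ} (hv₁ : v₁ ⬝ᵥ v₁ = 1) (hv₂ : v₂ ⬝ᵥ v₂ = 1)
    (x : ι → ℝ) :
    x ⬝ᵥ x - (v₂ ⬝ᵥ x) ^ 2
      ≤ 2 * (x ⬝ᵥ x - (v₁ ⬝ᵥ x) ^ 2) + 2 * (1 - (v₁ ⬝ᵥ v₂) ^ 2) * (v₁ ⬝ᵥ x) ^ 2 := by
  set a := v₁ ⬝ᵥ x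
  set t := v₁ ⬝ᵥ v₂
  have hsplit : x - (t * a) • v₂ = (x - a • v₁) + a • (v₁ - t • v₂) := by
    rw [smul_sub, smul_smul, mul_comm a t]
    abel
  have hlen : (a • (v₁ - t • v₂)) ⬝ᵥ (a • (v₁ - t • v₂)) = (1 - t ^ 2) * a ^ 2 := by
    rw [smul_dotProduct, dotProduct_smul, sub_smul_dotProduct_sub_smul hv₂, hv₁,
      dotProduct_comm v₂ v₁, smul_eq_mul, smul_eq_mul]
    ring
  calc x ⬝ᵥ x - (v₂ ⬝ᵥ x) ^ 2
      ≤ (x - (t * a) • v₂) ⬝ᵥ (x - (t * a) • v₂) := by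
        rw [sub_smul_dotProduct_sub_smul hv₂]
        linarith [sq_nonneg (v₂ ⬝ᵥ x - t * a)]
    _ ≤ 2 * ((x - a • v₁) ⬝ᵥ (x - a • v₁)) + 2 * ((1 - t ^ 2) * a ^ 2) := by
        rw [hsplit, ← hlen]
        exact add_dotProduct_add_self_le _ _
    _ = 2 * (x ⬝ᵥ x - a ^ 2) + 2 * (1 - t ^ 2) * a ^ 2 := by
        rw [sub_smul_dotProduct_sub_smul hv₁, sub_self]
        ring

theorem sub_mul_sq_dotProduct_le_three_mul {v₁ v₂ : ι → ℝ} (hv₁ : v₁ ⬝ᵥ v₁ = 1)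
    (hv₂ : v₂ ⬝ᵥ v₂ = 1) {lam c : ℝ} (hlam0 : 0 ≤ lam) (hlam1 : lam ≤ 1) (hc : 1 ≤ c)
    (hclose : 1 - (v₁ ⬝ᵥ v₂) ^ 2 ≤ c * lam) (x : ι → ℝ) :
    x ⬝ᵥ x - (1 - lam) * (v₂ ⬝ᵥ x) ^ 2
      ≤ 3 * c * (x ⬝ᵥ x - (1 - lam) * (v₁ ⬝ᵥ x) ^ 2) := by
  have hdist := dotProduct_self_sub_sq_le hv₁ hv₂ x
  have hP : 0 ≤ x ⬝ᵥ x - (v₁ ⬝ᵥ x) ^ 2 :=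
    sub_nonneg.2 (sq_dotProduct_le_dotProduct_self hv₁ x)
  have hb := mul_le_mul_of_nonneg_left (sq_dotProduct_le_dotProduct_self hv₂ x) hlam0
  have ha := mul_le_mul_of_nonneg_right hclose (sq_nonneg (v₁ ⬝ᵥ x))
  nlinarith [mul_nonneg (sub_nonneg.2 hc) hP, mul_nonneg (sub_nonneg.2 hlam1) hP,
    mul_nonneg (mul_nonneg hlam0 (sub_nonneg.2 hc)) (sq_nonneg (v₁ ⬝ᵥ x))]

end DotProduct

theorem isHermitian_one_sub_smul_vecMulVec {ι : Type*} [DecidableEq ι] (s : ℝ) (v : ι → ℝ) :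
    (1 - s • vecMulVec v v).IsHermitian := by
  have hv : (vecMulVec v v).IsHermitian := by
    rw [IsHermitian, conjTranspose_vecMulVec, star_trivial]
  exact isHermitian_one.sub (hv.smul (IsSelfAdjoint.all s))

theorem dotProduct_one_sub_smul_vecMulVec_mulVec {ι : Type*} [Fintype ι] [DecidableEq ι]
    (s : ℝ) (v x : ι → ℝ) :
    x ⬝ᵥ ((1 - s • vecMulVec v v) *ᵥ x) = x ⬝ᵥ x - s * (v ⬝ᵥ x) ^ 2 := by
  rw [dotProduct_mulVec, vecMul_sub, vecMul_one, vecMul_smul, vecMul_vecMulVec, sub_dotProduct,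
    smul_dotProduct, smul_dotProduct, dotProduct_comm x v, smul_eq_mul, smul_eq_mul]
  ring

theorem posSemidef_sub_of_dotProduct_mulVec_le {ι : Type*} [Fintype ι] {A B : Matrix ι ι ℝ}
    (hA : A.IsHermitian) (hB : B.IsHermitian) (h : ∀ x, x ⬝ᵥ (A *ᵥ x) ≤ x ⬝ᵥ (B *ᵥ x)) :
    (B - A).PosSemidef :=
  .of_dotProduct_mulVec_nonneg (hB.sub hA) fun x => by
    rw [star_trivial, sub_mulVec, dotProduct_sub, sub_nonneg]
    exact h x

theorem stmt_3_general {n : ℕ} (v₁ v₂ : Fin n → ℝ)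
    (hv₁ : v₁ ⬝ᵥ v₁ = 1) (hv₂ : v₂ ⬝ᵥ v₂ = 1)
    (lam c : ℝ) (hlam0 : 0 < lam) (hlam1 : lam ≤ 1) (hc : 1 ≤ c)
    (hclose : 1 - (v₁ ⬝ᵥ v₂) ^ 2 ≤ c * lam)
    (M₁ M₂ : Matrix (Fin n) (Fin n) ℝ)
    (hM₁ : M₁ = 1 - (1 - lam) • vecMulVec v₁ v₁)
    (hM₂ : M₂ = 1 - (1 - lam) • vecMulVec v₂ v₂) :
    (M₂ - (3 * c)⁻¹ • M₁).PosSemidef ∧ ((3 * c) • M₁ - M₂).PosSemidef := by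
  subst hM₁ hM₂
  have h3c : (0 : ℝ) < 3 * c := by linarith
  have hclose' : 1 - (v₂ ⬝ᵥ v₁) ^ 2 ≤ c * lam := by rwa [dotProduct_comm]
  have hM₁ := isHermitian_one_sub_smul_vecMulVec (1 - lam) v₁
  have hM₂ := isHermitian_one_sub_smul_vecMulVec (1 - lam) v₂
  constructor
  · refine posSemidef_sub_of_dotProduct_mulVec_le (hM₁.smul (.all _)) hM₂ fun x => ?_
    rw [smul_mulVec, dotProduct_smul, smul_eq_mul, dotProduct_one_sub_smul_vecMulVec_mulVec,
      dotProduct_one_sub_smul_vecMulVec_mulVec, inv_mul_le_iff₀ h3c]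
    exact sub_mul_sq_dotProduct_le_three_mul hv₂ hv₁ hlam0.le hlam1 hc hclose' x
  · refine posSemidef_sub_of_dotProduct_mulVec_le hM₂ (hM₁.smul (.all _)) fun x => ?_
    rw [smul_mulVec, dotProduct_smul, smul_eq_mul, dotProduct_one_sub_smul_vecMulVec_mulVec,
      dotProduct_one_sub_smul_vecMulVec_mulVec]
    exact sub_mul_sq_dotProduct_le_three_mul hv₁ hv₂ hlam0.le hlam1 hc hclose x

/-- If `v₁ ≠ v₂` are unit vectors with `1 - ⟨v₁,v₂⟩² ≤ c·λ` for
`λ ∈ (0,1]` and `c ≥ 1`, and `Mᵢ = I - (1-λ)·vᵢvᵢᵀ`, then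
`(1/(3c))·M₁ ⪯ M₂ ⪯ 3c·M₁` in the Loewner order. -/
theorem stmt_3 {n : ℕ} (v₁ v₂ : Fin n → ℝ) (hne : v₁ ≠ v₂)
    (hv₁ : v₁ ⬝ᵥ v₁ = 1) (hv₂ : v₂ ⬝ᵥ v₂ = 1)
    (lam c : ℝ) (hlam0 : 0 < lam) (hlam1 : lam ≤ 1) (hc : 1 ≤ c)
    (hclose : 1 - (v₁ ⬝ᵥ v₂) ^ 2 ≤ c * lam)
    (M₁ M₂ : Matrix (Fin n) (Fin n) ℝ)
    (hM₁ : M₁ = 1 - (1 - lam) • vecMulVec v₁ v₁)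
    (hM₂ : M₂ = 1 - (1 - lam) • vecMulVec v₂ v₂) :
    (M₂ - (3 * c)⁻¹ • M₁).PosSemidef ∧ ((3 * c) • M₁ - M₂).PosSemidef :=
  stmt_3_general v₁ v₂ hv₁ hv₂ lam c hlam0 hlam1 hc hclose M₁ M₂ hM₁ hM₂
end

section
/- Let v₁ and v₂ be unit vectors in ℝⁿ with 1 − (v₁ᵀ v₂)² ≤ c·λ where λ ∈ (0,1] and c ≥ 1, and let M₁ = I − (1−λ)v₁v₁ᵀ, M₂ = I − (1−λ)v₂v₂ᵀ. Then every eigenvalue γ of M₁^{−1/2}(M₂ − M₁)M₁^{−1/2} satisfies |γ| ≤ c(1−λ)² + √c·(1−λ), and in particular |γ| ≤ 2c. -/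
/-!
Put `e = 1 - λ`, `p = S v₁`, `q = S v₂`. Since `S² = M₁⁻¹ = I + (e/λ) v₁v₁ᵀ`, the matrix
`S (M₂ - M₁) S` is `e (ppᵀ - qqᵀ)`, which acts on `span {p, q}` and kills its orthogonal
complement. Hence every eigenvalue `γ` is `0` or a root of `γ² - Bγ - C`, where
`B = e (|p|² - |q|²)` and `C = e² (|p|²|q|² - ⟨p, q⟩²)`. Computing with `M₁⁻¹` gives
`B = C = e² (1 - ⟨v₁, v₂⟩²) / λ ≤ c e²`, and a root of such a quadratic has `|γ| ≤ |B| + √C`.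
-/

open Matrix

section
variable {n R : Type*} [Fintype n]

theorem sq_dotProduct_le [CommRing R] [LinearOrder R] [IsStrictOrderedRing R] (v w : n → R) :
    (v ⬝ᵥ w) ^ 2 ≤ (v ⬝ᵥ v) * (w ⬝ᵥ w) := by
  simpa only [dotProduct, sq] using Finset.sum_mul_sq_le_sq_mul_sq Finset.univ v w

theorem mul_self_eq_of_mul_mul_eq_one [CommRing R] [DecidableEq n] {S M G : Matrix n n R}
    (hS : S * M * S = 1) (hG : M * G = 1) : S * S = G := by
  have hMS : M * (S * S) = 1 := by
    rw [← Matrix.mul_assoc]; exact mul_eq_one_comm.mp (by rwa [← Matrix.mul_assoc])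
  calc S * S = G * M * (S * S) := by rw [mul_eq_one_comm.mp hG, Matrix.one_mul]
    _ = G := by rw [Matrix.mul_assoc, hMS, Matrix.mul_one]

theorem one_sub_smul_vecMulVec_mul_eq_one [Field R] [DecidableEq n] {v : n → R}
    (hv : v ⬝ᵥ v = 1) {lam : R} (hlam : lam ≠ 0) :
    (1 - (1 - lam) • vecMulVec v v) * (1 + ((1 - lam) / lam) • vecMulVec v v) = 1 := by
  have hvv : vecMulVec v v * vecMulVec v v = vecMulVec v v := by
    rw [vecMulVec_mul_vecMulVec, hv, one_smul]
  have hcoef : (1 - lam) / lam - (1 - lam) - (1 - lam) * ((1 - lam) / lam) = 0 := by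
    field_simp; ring
  simp only [Matrix.sub_mul, Matrix.mul_add, Matrix.one_mul, Matrix.mul_one, Matrix.smul_mul,
    Matrix.mul_smul, hvv]
  linear_combination (norm := module) hcoef • vecMulVec v v

theorem mul_vecMulVec_mul_of_transpose_eq [CommRing R] {S : Matrix n n R} (hS : Sᵀ = S)
    (v : n → R) : S * vecMulVec v v * S = vecMulVec (S *ᵥ v) (S *ᵥ v) := by
  rw [mul_vecMulVec, vecMulVec_mul, ← mulVec_transpose, hS]

theorem dotProduct_mulVec_mulVec_of_transpose_eq [CommRing R] {S : Matrix n n R} (hS : Sᵀ = S)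
    (v w : n → R) : (S *ᵥ v) ⬝ᵥ (S *ᵥ w) = v ⬝ᵥ (S * S) *ᵥ w := by
  rw [← mulVec_mulVec, dotProduct_mulVec v S, ← mulVec_transpose, hS]

theorem dotProduct_one_add_smul_vecMulVec_mulVec [CommRing R] [DecidableEq n] (a : R)
    (u v w : n → R) :
    u ⬝ᵥ (1 + a • vecMulVec v v) *ᵥ w = u ⬝ᵥ w + a * (u ⬝ᵥ v) * (v ⬝ᵥ w) := by
  simp only [add_mulVec, one_mulVec, smul_mulVec, vecMulVec_mulVec, op_smul_eq_smul,
    dotProduct_add, dotProduct_smul, smul_eq_mul]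
  ring

theorem eigenvalue_root_of_smul_vecMulVec_sub_vecMulVec [Field R] {e γ : R} {p q x : n → R}
    (hx : x ≠ 0) (h : (e • (vecMulVec p p - vecMulVec q q)) *ᵥ x = γ • x) :
    γ * (γ ^ 2 - e * (p ⬝ᵥ p - q ⬝ᵥ q) * γ
      - e ^ 2 * ((p ⬝ᵥ p) * (q ⬝ᵥ q) - (p ⬝ᵥ q) ^ 2)) = 0 := by
  set f := γ ^ 2 - e * (p ⬝ᵥ p - q ⬝ᵥ q) * γ - e ^ 2 * ((p ⬝ᵥ p) * (q ⬝ᵥ q) - (p ⬝ᵥ q) ^ 2)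
  have hx' : γ • x = (e * (p ⬝ᵥ x)) • p - (e * (q ⬝ᵥ x)) • q := by
    rw [← h]
    simp only [smul_mulVec, sub_mulVec, vecMulVec_mulVec, op_smul_eq_smul, smul_sub, smul_smul]
  have hp := congrArg (p ⬝ᵥ ·) hx'
  have hq := congrArg (q ⬝ᵥ ·) hx'
  simp only [dotProduct_sub, dotProduct_smul, smul_eq_mul, dotProduct_comm q p] at hp hq
  have : (γ * f) • x = 0 := by
    rw [mul_comm, ← smul_smul, hx', smul_sub, smul_smul, smul_smul]
    have hfp : f * (e * (p ⬝ᵥ x)) = 0 := by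
      simp only [f]; linear_combination e * (γ + e * (q ⬝ᵥ q)) * hp - e ^ 2 * (p ⬝ᵥ q) * hq
    have hfq : f * (e * (q ⬝ᵥ x)) = 0 := by
      simp only [f]; linear_combination e ^ 2 * (p ⬝ᵥ q) * hp + e * (γ - e * (p ⬝ᵥ p)) * hq
    rw [hfp, hfq, zero_smul, zero_smul, sub_zero]
  exact (smul_eq_zero.mp this).resolve_right hx

end

theorem abs_le_of_mul_quadratic_eq_zero {γ B C : ℝ} (hC : 0 ≤ C)
    (h : γ * (γ ^ 2 - B * γ - C) = 0) : |γ| ≤ |B| + √C := by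
  rcases mul_eq_zero.mp h with rfl | h
  · rw [abs_zero]; positivity
  have hr := Real.sq_sqrt hC
  have hr0 := Real.sqrt_nonneg C
  have hBγ : B * γ ≤ |B| * |γ| := by rw [← abs_mul]; exact le_abs_self _
  by_contra! hlt
  nlinarith [sq_abs γ, abs_nonneg B]

/-- With `v₁, v₂` unit vectors, `1 - ⟨v₁,v₂⟩² ≤ c·λ`, `λ ∈ (0,1]`,
`c ≥ 1`, `Mᵢ = I - (1-λ)vᵢvᵢᵀ`, and `S = M₁^{-1/2}` (i.e. `S` positive semidefinite with
`S * M₁ * S = I`), every eigenvalue `γ` of `S * (M₂ - M₁) * S` satisfies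
`|γ| ≤ c(1-λ)² + √c·(1-λ) ≤ 2c`. -/
theorem stmt_4 {n : ℕ} (v₁ v₂ : Fin n → ℝ)
    (hv₁ : v₁ ⬝ᵥ v₁ = 1) (hv₂ : v₂ ⬝ᵥ v₂ = 1)
    (lam c : ℝ) (hlam0 : 0 < lam) (hlam1 : lam ≤ 1) (hc : 1 ≤ c)
    (hclose : 1 - (v₁ ⬝ᵥ v₂) ^ 2 ≤ c * lam)
    (M₁ M₂ S : Matrix (Fin n) (Fin n) ℝ)
    (hM₁ : M₁ = 1 - (1 - lam) • vecMulVec v₁ v₁)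
    (hM₂ : M₂ = 1 - (1 - lam) • vecMulVec v₂ v₂)
    (hS : S.PosSemidef) (hSsqrt : S * M₁ * S = 1)
    (γ : ℝ) (x : Fin n → ℝ) (hx : x ≠ 0)
    (heig : (S * (M₂ - M₁) * S).mulVec x = γ • x) :
    |γ| ≤ c * (1 - lam) ^ 2 + Real.sqrt c * (1 - lam) ∧ |γ| ≤ 2 * c := by
  have hSt : Sᵀ = S := conjTranspose_eq_transpose_of_trivial S ▸ hS.1.eq
  have hSS : S * S = 1 + ((1 - lam) / lam) • vecMulVec v₁ v₁ :=
    mul_self_eq_of_mul_mul_eq_one hSsqrt (hM₁ ▸ one_sub_smul_vecMulVec_mul_eq_one hv₁ hlam0.ne')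
  have hA : S * (M₂ - M₁) * S = (1 - lam) •
      (vecMulVec (S *ᵥ v₁) (S *ᵥ v₁) - vecMulVec (S *ᵥ v₂) (S *ᵥ v₂)) := by
    rw [hM₁, hM₂, sub_sub_sub_cancel_left, ← smul_sub, Matrix.mul_smul, Matrix.smul_mul,
      Matrix.mul_sub, Matrix.sub_mul, mul_vecMulVec_mul_of_transpose_eq hSt,
      mul_vecMulVec_mul_of_transpose_eq hSt]
  have hchar := eigenvalue_root_of_smul_vecMulVec_sub_vecMulVec hx (hA ▸ heig)
  simp only [dotProduct_mulVec_mulVec_of_transpose_eq hSt, hSS,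
    dotProduct_one_add_smul_vecMulVec_mulVec, hv₁, hv₂, dotProduct_comm v₂ v₁] at hchar
  set B := (1 - lam) ^ 2 * (1 - (v₁ ⬝ᵥ v₂) ^ 2) / lam with hB
  have hroot : γ * (γ ^ 2 - B * γ - B) = 0 := by
    rw [← hchar, hB]; field_simp; ring
  have hB0 : 0 ≤ B := by
    have ht : (v₁ ⬝ᵥ v₂) ^ 2 ≤ 1 := by simpa [hv₁, hv₂] using sq_dotProduct_le v₁ v₂
    have hs : 0 ≤ 1 - (v₁ ⬝ᵥ v₂) ^ 2 := by linarith
    positivity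
  have hBc : B ≤ c * (1 - lam) ^ 2 := by
    rw [hB, mul_div_assoc, mul_comm c]
    gcongr
    rwa [div_le_iff₀ hlam0]
  have hbound : |γ| ≤ c * (1 - lam) ^ 2 + √c * (1 - lam) :=
    calc |γ| ≤ |B| + √B := abs_le_of_mul_quadratic_eq_zero hB0 hroot
      _ ≤ c * (1 - lam) ^ 2 + √(c * (1 - lam) ^ 2) := by rw [abs_of_nonneg hB0]; gcongr
      _ = c * (1 - lam) ^ 2 + √c * (1 - lam) := by
        rw [Real.sqrt_mul (by linarith), Real.sqrt_sq (by linarith)]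
  refine ⟨hbound, hbound.trans ?_⟩
  have hsqrt : √c ≤ c := (Real.sqrt_le_left (by linarith)).mpr (by nlinarith)
  calc c * (1 - lam) ^ 2 + √c * (1 - lam) ≤ c * 1 ^ 2 + c * 1 := by
        gcongr <;> linarith
    _ = 2 * c := by ring
end

section
/- Let G = (V,E,η) be a β-balanced lossy flow graph with β ≤ 1 (each η_e ∈ [1, 1+β]) and let Ḡ be its smoothed graph. Let N_G = D_G^{−1/2} L_G D_G^{−1/2} and N_Ḡ = D_Ḡ^{−1/2} L_Ḡ D_Ḡ^{−1/2} be the normalized Laplacians, where L_G = B_GᵀB_G, L_Ḡ = B_ḠᵀB_Ḡ and D_G, D_Ḡ their diagonals (assumed positive). Then ‖N_G − N_Ḡ‖₂ ≤ 10β, where ‖·‖₂ is the spectral norm. -/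
/-!
Write `N_Ḡ = YᵀY` and `N_G = XᵀX`, where `Y` is `B_Ḡ` and `X` is `B_G` with every column scaled
to unit length. Since `a e ≠ b e`, `B_G = r ⊙ B_Ḡ` for a Hadamard factor `r` with entries in
`[1, 1 + β]`, so each column norm `s_v` of `B_G` lies between the column norm `t_v` of `B_Ḡ` and
`(1 + β) t_v`, and `(X - Y)_ev = (B_Ḡ)_ev (r_ev / s_v - 1 / t_v)` has size at most
`β |(B_Ḡ)_ev| / s_v`. Every row has at most two nonzero entries, so Cauchy–Schwarz along the rows
bounds the spectral norm by `√2` times the largest column norm: `‖X‖, ‖Y‖ ≤ √2` and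
`‖X - Y‖ ≤ √2 β`. Finally `XᵀX - YᵀY = (X - Y)ᵀX + Yᵀ(X - Y)`, so `‖N_G - N_Ḡ‖ ≤ 4β`.
-/

open Matrix Finset
open scoped Matrix.Norms.L2Operator

lemma abs_div_sub_one_div_le {r s t β : ℝ} (hr : r ∈ Set.Icc 1 (1 + β)) (ht : 0 ≤ t) (hts : t ≤ s)
    (hst : s ≤ (1 + β) * t) : |r / s - 1 / t| ≤ β / s := by
  rcases ht.eq_or_lt with rfl | ht
  · obtain rfl : s = 0 := by linarith
    simp
  have hs : 0 < s := ht.trans_le hts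
  -- both `r / s` and `1 / t` lie in `[1 / s, (1 + β) / s]`
  have h₁ : 1 / s ≤ 1 / t := one_div_le_one_div_of_le ht hts
  have h₂ : 1 / t ≤ (1 + β) / s := by rw [div_le_div_iff₀ ht hs]; linarith
  have h₃ : 1 / s ≤ r / s := div_le_div_of_nonneg_right hr.1 hs.le
  have h₄ : r / s ≤ (1 + β) / s := div_le_div_of_nonneg_right hr.2 hs.le
  have h₅ : (1 + β) / s = 1 / s + β / s := add_div _ _ _
  rw [abs_le]
  constructor <;> linarith

lemma card_filter_ne_zero_le_of_eq_mul {V : Type*} [Fintype V] {f g h : V → ℝ}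
    (hfg : ∀ v, f v = g v * h v) :
    #{v | f v ≠ 0} ≤ #{v | g v ≠ 0} :=
  card_le_card fun v => by
    simp only [mem_filter, mem_univ, true_and, hfg v]
    exact left_ne_zero_of_mul

namespace Matrix

variable {E V : Type*} [Fintype E]

lemma sum_sq_mulVec_le_of_card_support_le [Fintype V] {M : Matrix E V ℝ} {k : ℕ}
    (hrow : ∀ e, #{v | M e v ≠ 0} ≤ k) (x : V → ℝ) :
    ∑ e, (M *ᵥ x) e ^ 2 ≤ k * ∑ v, (∑ e, M e v ^ 2) * x v ^ 2 := by
  have hentry : ∀ e, (M *ᵥ x) e ^ 2 ≤ k * ∑ v, (M e v * x v) ^ 2 := fun e => by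
    have hsupp : (M *ᵥ x) e = ∑ v with M e v ≠ 0, M e v * x v :=
      (sum_filter_of_ne fun v _ h => left_ne_zero_of_mul h).symm
    calc (M *ᵥ x) e ^ 2 ≤ #{v | M e v ≠ 0} * ∑ v with M e v ≠ 0, (M e v * x v) ^ 2 := by
          rw [hsupp]; exact sq_sum_le_card_mul_sum_sq
      _ ≤ k * ∑ v, (M e v * x v) ^ 2 :=
          mul_le_mul (by exact_mod_cast hrow e)
            (sum_le_sum_of_subset_of_nonneg (filter_subset _ _) fun _ _ _ => sq_nonneg _)
            (sum_nonneg fun _ _ => sq_nonneg _) (Nat.cast_nonneg k)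
  calc ∑ e, (M *ᵥ x) e ^ 2 ≤ ∑ e, k * ∑ v, (M e v * x v) ^ 2 := sum_le_sum fun e _ => hentry e
    _ = k * ∑ v, (∑ e, M e v ^ 2) * x v ^ 2 := by
      rw [← mul_sum, sum_comm]
      simp only [mul_pow, sum_mul]

noncomputable def colNorm (B : Matrix E V ℝ) (v : V) : ℝ := √(∑ e, B e v ^ 2)

/-- Zero columns stay zero, since `x / 0 = 0`. -/
noncomputable def colNormalize (B : Matrix E V ℝ) : Matrix E V ℝ :=
  of fun e v => B e v / colNorm B v

lemma colNorm_nonneg (B : Matrix E V ℝ) (v : V) : 0 ≤ colNorm B v := Real.sqrt_nonneg _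

lemma colNorm_sq (B : Matrix E V ℝ) (v : V) : colNorm B v ^ 2 = ∑ e, B e v ^ 2 :=
  Real.sq_sqrt (sum_nonneg fun _ _ => sq_nonneg _)

lemma transpose_colNormalize_mul_self (B : Matrix E V ℝ) :
    (colNormalize B)ᵀ * colNormalize B =
      of fun u v => (Bᵀ * B) u v / (√((Bᵀ * B) u u) * √((Bᵀ * B) v v)) := by
  ext u v
  simp only [mul_apply, transpose_apply, colNormalize, colNorm, of_apply, sq, sum_div,
    div_mul_div_comm]

lemma sum_sq_colNormalize_le_one (B : Matrix E V ℝ) (v : V) :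
    ∑ e, colNormalize B e v ^ 2 ≤ 1 := by
  simp only [colNormalize, of_apply, div_pow, ← sum_div, ← colNorm_sq]
  exact div_self_le_one _

lemma card_filter_colNormalize_ne_zero_le [Fintype V] (B : Matrix E V ℝ) (e : E) :
    #{v | colNormalize B e v ≠ 0} ≤ #{v | B e v ≠ 0} :=
  card_filter_ne_zero_le_of_eq_mul fun _ => div_eq_mul_inv _ _

variable {r B : Matrix E V ℝ} {β : ℝ}

lemma colNorm_le_colNorm_hadamard (hr : ∀ e v, 1 ≤ r e v) (v : V) :
    colNorm B v ≤ colNorm (r ⊙ B) v := by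
  refine Real.sqrt_le_sqrt (sum_le_sum fun e _ => ?_)
  rw [hadamard_apply, mul_pow]
  exact le_mul_of_one_le_left (sq_nonneg _) (one_le_pow₀ (hr e v))

lemma colNorm_hadamard_le (hβ : 0 ≤ β) (hr : ∀ e v, r e v ∈ Set.Icc 1 (1 + β)) (v : V) :
    colNorm (r ⊙ B) v ≤ (1 + β) * colNorm B v := by
  rw [colNorm, colNorm, ← Real.sqrt_sq (by linarith : 0 ≤ 1 + β), ← Real.sqrt_mul (sq_nonneg _),
    mul_sum]
  refine Real.sqrt_le_sqrt (sum_le_sum fun e _ => ?_)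
  rw [hadamard_apply, mul_pow]
  exact mul_le_mul_of_nonneg_right (pow_le_pow_left₀ (by linarith [(hr e v).1]) (hr e v).2 2)
    (sq_nonneg _)

lemma sum_sq_colNormalize_hadamard_sub_le (hβ : 0 ≤ β) (hr : ∀ e v, r e v ∈ Set.Icc 1 (1 + β))
    (v : V) : ∑ e, (colNormalize (r ⊙ B) - colNormalize B) e v ^ 2 ≤ β ^ 2 := by
  set s := colNorm (r ⊙ B) v
  set t := colNorm B v
  have hts : t ≤ s := colNorm_le_colNorm_hadamard (fun e v => (hr e v).1) v
  have hentry : ∀ e, (colNormalize (r ⊙ B) - colNormalize B) e v ^ 2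
      ≤ B e v ^ 2 * (β / s) ^ 2 := fun e => by
    have h := abs_div_sub_one_div_le (hr e v) (colNorm_nonneg _ _) hts
      (colNorm_hadamard_le hβ hr v)
    calc (colNormalize (r ⊙ B) - colNormalize B) e v ^ 2
          = B e v ^ 2 * (r e v / s - 1 / t) ^ 2 := by
          simp only [sub_apply, colNormalize, of_apply, hadamard_apply, s, t]; ring
      _ ≤ B e v ^ 2 * (β / s) ^ 2 :=
          mul_le_mul_of_nonneg_left (sq_le_sq' (abs_le.1 h).1 (abs_le.1 h).2) (sq_nonneg _)
  calc ∑ e, (colNormalize (r ⊙ B) - colNormalize B) e v ^ 2 ≤ ∑ e, B e v ^ 2 * (β / s) ^ 2 :=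
        sum_le_sum fun e _ => hentry e
    _ = β ^ 2 * (t / s) ^ 2 := by rw [← sum_mul, ← colNorm_sq]; ring
    _ ≤ β ^ 2 := by
        refine mul_le_of_le_one_right (sq_nonneg _) (pow_le_one₀ ?_ ?_)
        · exact div_nonneg (colNorm_nonneg _ _) (colNorm_nonneg _ _)
        · exact div_le_one_of_le₀ hts (colNorm_nonneg _ _)

variable [Fintype V] [DecidableEq V]

lemma l2_opNorm_le_of_sum_sq_mulVec_le {M : Matrix E V ℝ} {C : ℝ} (hC : 0 ≤ C)
    (h : ∀ x, ∑ e, (M *ᵥ x) e ^ 2 ≤ C ^ 2 * ∑ v, x v ^ 2) : ‖M‖ ≤ C := by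
  rw [l2_opNorm_def]
  refine ContinuousLinearMap.opNorm_le_bound _ hC fun x => ?_
  refine (sq_le_sq₀ (norm_nonneg _) (by positivity)).mp ?_
  rw [mul_pow, EuclideanSpace.norm_sq_eq, EuclideanSpace.norm_sq_eq]
  simp only [Real.norm_eq_abs, sq_abs]
  exact h x

lemma l2_opNorm_le_of_card_support_le {M : Matrix E V ℝ} {k : ℕ} {c : ℝ}
    (hc : 0 ≤ c) (hrow : ∀ e, #{v | M e v ≠ 0} ≤ k) (hcol : ∀ v, ∑ e, M e v ^ 2 ≤ c ^ 2) :
    ‖M‖ ≤ √k * c := by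
  refine l2_opNorm_le_of_sum_sq_mulVec_le (by positivity) fun x => ?_
  calc ∑ e, (M *ᵥ x) e ^ 2 ≤ k * ∑ v, (∑ e, M e v ^ 2) * x v ^ 2 :=
        sum_sq_mulVec_le_of_card_support_le hrow x
    _ ≤ k * ∑ v, c ^ 2 * x v ^ 2 := by gcongr with v; exact hcol v
    _ = (√k * c) ^ 2 * ∑ v, x v ^ 2 := by
      rw [mul_pow, Real.sq_sqrt (Nat.cast_nonneg k), ← mul_sum, mul_assoc]

lemma l2_opNorm_transpose_mul_self_sub_le (X Y : Matrix E V ℝ) :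
    ‖Xᵀ * X - Yᵀ * Y‖ ≤ ‖X - Y‖ * (‖X‖ + ‖Y‖) := by
  classical
  have hT : ∀ Z : Matrix E V ℝ, ‖Zᵀ‖ = ‖Z‖ := fun Z => by
    rw [← conjTranspose_eq_transpose_of_trivial, l2_opNorm_conjTranspose]
  calc ‖Xᵀ * X - Yᵀ * Y‖ = ‖(X - Y)ᵀ * X + Yᵀ * (X - Y)‖ := by
        rw [transpose_sub, Matrix.sub_mul, Matrix.mul_sub]; abel_nf
    _ ≤ ‖(X - Y)ᵀ‖ * ‖X‖ + ‖Yᵀ‖ * ‖X - Y‖ :=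
        (norm_add_le _ _).trans (add_le_add (l2_opNorm_mul _ _) (l2_opNorm_mul _ _))
    _ = ‖X - Y‖ * (‖X‖ + ‖Y‖) := by rw [hT, hT]; ring

theorem l2_opNorm_gram_colNormalize_hadamard_sub_le {k : ℕ} (hβ : 0 ≤ β)
    (hr : ∀ e v, r e v ∈ Set.Icc 1 (1 + β)) (hrow : ∀ e, #{v | B e v ≠ 0} ≤ k) :
    ‖(colNormalize (r ⊙ B))ᵀ * colNormalize (r ⊙ B) - (colNormalize B)ᵀ * colNormalize B‖
      ≤ 2 * k * β := by
  have hnormalized : ∀ M : Matrix E V ℝ, (∀ e, #{v | M e v ≠ 0} ≤ k) → ‖colNormalize M‖ ≤ √k :=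
    fun M hM => (l2_opNorm_le_of_card_support_le zero_le_one
      (fun e => (card_filter_colNormalize_ne_zero_le M e).trans (hM e))
      fun v => (sum_sq_colNormalize_le_one M v).trans_eq (one_pow 2).symm).trans_eq (mul_one _)
  have hX : ‖colNormalize (r ⊙ B)‖ ≤ √k := hnormalized _ fun e =>
    (card_filter_ne_zero_le_of_eq_mul fun v => mul_comm _ _).trans (hrow e)
  have hY : ‖colNormalize B‖ ≤ √k := hnormalized B hrow
  have hXY : ‖colNormalize (r ⊙ B) - colNormalize B‖ ≤ √k * β :=
    l2_opNorm_le_of_card_support_le hβ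
      (fun e => (card_filter_ne_zero_le_of_eq_mul
        (h := fun v => r e v / colNorm (r ⊙ B) v - 1 / colNorm B v) fun v => by
          simp only [sub_apply, colNormalize, of_apply, hadamard_apply]; ring).trans (hrow e))
      (sum_sq_colNormalize_hadamard_sub_le hβ hr)
  calc _ ≤ ‖colNormalize (r ⊙ B) - colNormalize B‖
          * (‖colNormalize (r ⊙ B)‖ + ‖colNormalize B‖) :=
        l2_opNorm_transpose_mul_self_sub_le _ _
    _ ≤ √k * β * (√k + √k) := by gcongr
    _ = 2 * k * β := by
        linear_combination (2 * β) * Real.mul_self_sqrt (Nat.cast_nonneg (α := ℝ) k)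

end Matrix

theorem stmt_6_general {V E : Type*} [Fintype V] [Fintype E] [DecidableEq V]
    (a b : E → V) (hab : ∀ e, a e ≠ b e)
    (β : ℝ) (hβ0 : 0 ≤ β)
    (η : E → ℝ) (hη : ∀ e, 1 ≤ η e ∧ η e ≤ 1 + β)
    (BG BS : Matrix E V ℝ)
    (hBG : ∀ e v, BG e v = (if v = b e then 1 else 0) - η e * (if v = a e then 1 else 0))
    (hBS : ∀ e v, BS e v = (if v = b e then 1 else 0) - (if v = a e then 1 else 0))
    (LG LS : Matrix V V ℝ) (hLG : LG = BGᵀ * BG) (hLS : LS = BSᵀ * BS)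
    (NG NS : Matrix V V ℝ)
    (hNG : ∀ u v, NG u v = LG u v / (Real.sqrt (LG u u) * Real.sqrt (LG v v)))
    (hNS : ∀ u v, NS u v = LS u v / (Real.sqrt (LS u u) * Real.sqrt (LS v v))) :
    ‖Matrix.toEuclideanCLM (𝕜 := ℝ) (NG - NS)‖ ≤ 10 * β := by
  obtain ⟨r, hr_def⟩ : ∃ r : Matrix E V ℝ, r = of fun e v => if v = a e then η e else 1 :=
    ⟨_, rfl⟩
  have hBG_eq : BG = r ⊙ BS := by
    ext e v
    by_cases hv : v = a e
    · simp [hr_def, hBG, hBS, hv, hab e]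
    · simp [hr_def, hBG, hBS, hv]
  have hr : ∀ e v, r e v ∈ Set.Icc 1 (1 + β) := fun e v => by
    by_cases hv : v = a e
    · simpa [hr_def, hv] using hη e
    · simpa [hr_def, hv] using hβ0
  have hrow : ∀ e, #{v | BS e v ≠ 0} ≤ 2 := fun e => by
    refine (card_le_card (t := {a e, b e}) fun v => ?_).trans card_le_two
    simp only [mem_filter, mem_univ, true_and, hBS, mem_insert, mem_singleton]
    split_ifs <;> simp_all
  have hNG_eq : NG = (colNormalize BG)ᵀ * colNormalize BG := by
    ext u v; rw [transpose_colNormalize_mul_self, of_apply, hNG, hLG]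
  have hNS_eq : NS = (colNormalize BS)ᵀ * colNormalize BS := by
    ext u v; rw [transpose_colNormalize_mul_self, of_apply, hNS, hLS]
  rw [l2_opNorm_toEuclideanCLM, hNG_eq, hNS_eq, hBG_eq]
  calc _ ≤ 2 * (2 : ℕ) * β := l2_opNorm_gram_colNormalize_hadamard_sub_le hβ0 hr hrow
    _ ≤ 10 * β := by push_cast; linarith

/-- For a `β`-balanced lossy flow graph `G` (with `0 ≤ β ≤ 1`) with no
isolated vertices, the normalized lossy Laplacian `N_G = D_G^{-1/2} L_G D_G^{-1/2}` and the
normalized Laplacian `N_Ḡ` of the smoothed graph satisfy `‖N_G - N_Ḡ‖₂ ≤ 10β` in the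
spectral (ℓ₂ operator) norm. -/
theorem stmt_6 {V E : Type*} [Fintype V] [Fintype E] [DecidableEq V]
    (a b : E → V) (hab : ∀ e, a e ≠ b e)
    (β : ℝ) (hβ0 : 0 ≤ β) (hβ1 : β ≤ 1)
    (η : E → ℝ) (hη : ∀ e, 1 ≤ η e ∧ η e ≤ 1 + β)
    (BG BS : Matrix E V ℝ)
    (hBG : ∀ e v, BG e v = (if v = b e then 1 else 0) - η e * (if v = a e then 1 else 0))
    (hBS : ∀ e v, BS e v = (if v = b e then 1 else 0) - (if v = a e then 1 else 0))
    (LG LS : Matrix V V ℝ) (hLG : LG = BGᵀ * BG) (hLS : LS = BSᵀ * BS)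
    (hdGpos : ∀ v, 0 < LG v v) (hdSpos : ∀ v, 0 < LS v v)
    (NG NS : Matrix V V ℝ)
    (hNG : ∀ u v, NG u v = LG u v / (Real.sqrt (LG u u) * Real.sqrt (LG v v)))
    (hNS : ∀ u v, NS u v = LS u v / (Real.sqrt (LS u u) * Real.sqrt (LS v v))) :
    ‖Matrix.toEuclideanCLM (𝕜 := ℝ) (NG - NS)‖ ≤ 10 * β :=
  stmt_6_general a b hab β hβ0 η hη BG BS hBG hBS LG LS hLG hLS NG NS hNG hNS
end

section
/- Let G = (V,E,η) be a β-balanced lossy flow graph with smoothed graph Ḡ satisfying λ₂(N_Ḡ) ≤ 1, let d ∈ ℝ^V with d_G ≤ d ≤ c·d_G for c ≥ 1 and D = diag(d). If β ≤ λ₂(N_Ḡ)/(40c), then for any ε ∈ [0,1], the spectral gap of M := D^{−1/2} L_G D^{−1/2} + ε·I satisfies λ₂(M) − λ₁(M) ≥ λ₂(N_Ḡ)/(4c). -/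
open Matrix

section Helpers

lemma ortho_complete' {V : Type*} [Fintype V] [DecidableEq V]
    (u : Fin (Fintype.card V) → V → ℝ)
    (horth : ∀ i j, u i ⬝ᵥ u j = if i = j then (1 : ℝ) else 0) (x y : V) :
    ∑ i, u i x * u i y = if x = y then (1 : ℝ) else 0 := by
  classical
  have e : Fin (Fintype.card V) ≃ V := (Fintype.equivFin V).symm
  set U : Matrix (Fin (Fintype.card V)) (Fin (Fintype.card V)) ℝ :=
    fun i j => u i (e j) with hU
  have h1 : U * Uᵀ = 1 := by
    ext i j
    simp only [Matrix.mul_apply, Matrix.transpose_apply, hU, Matrix.one_apply]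
    rw [← horth i j]
    simp only [dotProduct]
    exact Fintype.sum_equiv e _ _ (fun k => rfl)
  have h2 : Uᵀ * U = 1 := mul_eq_one_comm.mp h1
  have h3 := congrFun (congrFun h2 (e.symm x)) (e.symm y)
  simp only [Matrix.mul_apply, Matrix.transpose_apply] at h3
  simp only [Matrix.mul_apply, Matrix.transpose_apply, hU, Matrix.one_apply,
    Equiv.apply_symm_apply, EmbeddingLike.apply_eq_iff_eq] at h3
  rw [h3]

lemma ortho_expand' {V : Type*} [Fintype V] [DecidableEq V]
    (u : Fin (Fintype.card V) → V → ℝ)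
    (horth : ∀ i j, u i ⬝ᵥ u j = if i = j then (1 : ℝ) else 0) (z : V → ℝ) (x : V) :
    z x = ∑ i, (z ⬝ᵥ u i) * u i x := by
  classical
  have h1 : ∀ i : Fin (Fintype.card V), (z ⬝ᵥ u i) * u i x = ∑ y, z y * (u i y * u i x) := by
    intro i
    simp [dotProduct, Finset.sum_mul, mul_assoc]
  rw [Finset.sum_congr rfl (fun i _ => h1 i), Finset.sum_comm]
  have h2 : ∀ y, ∑ i : Fin (Fintype.card V), z y * (u i y * u i x)
      = z y * ∑ i, u i y * u i x := by
    intro y; rw [Finset.mul_sum]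
  rw [Finset.sum_congr rfl (fun y _ => h2 y)]
  simp [ortho_complete' u horth, Finset.sum_ite_eq]

lemma sum_dotProduct' {ι V : Type*} [Fintype ι] [Fintype V]
    (f : ι → V → ℝ) (z : V → ℝ) :
    (∑ i, f i) ⬝ᵥ z = ∑ i, f i ⬝ᵥ z := by
  simp only [dotProduct, Finset.sum_apply, Finset.sum_mul]
  exact Finset.sum_comm

lemma quad_expand' {V : Type*} [Fintype V] [DecidableEq V]
    (u : Fin (Fintype.card V) → V → ℝ)
    (hz : ∀ (z : V → ℝ) (x : V), z x = ∑ i, (z ⬝ᵥ u i) * u i x)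
    (A : Matrix V V ℝ) (lam : Fin (Fintype.card V) → ℝ)
    (heig : ∀ i, A.mulVec (u i) = lam i • u i) (z : V → ℝ) :
    z ⬝ᵥ A.mulVec z = ∑ i, lam i * (z ⬝ᵥ u i) ^ 2 := by
  classical
  have hz' : z = ∑ i, (z ⬝ᵥ u i) • u i := by
    funext x; rw [hz z x]; simp [Finset.sum_apply]
  have hmv : A.mulVec z = ∑ i, ((z ⬝ᵥ u i) * lam i) • u i := by
    conv_lhs => rw [hz']
    rw [show A.mulVec (∑ i, (z ⬝ᵥ u i) • u i) = A.mulVecLin (∑ i, (z ⬝ᵥ u i) • u i) from rfl,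
      map_sum]
    refine Finset.sum_congr rfl fun i _ => ?_
    rw [_root_.map_smul, Matrix.mulVecLin_apply, heig i, smul_smul]
  rw [hmv, dotProduct_comm, sum_dotProduct']
  refine Finset.sum_congr rfl fun i _ => ?_
  rw [smul_dotProduct, dotProduct_comm]
  simp only [smul_eq_mul]; ring

lemma norm_expand' {V : Type*} [Fintype V] [DecidableEq V]
    (u : Fin (Fintype.card V) → V → ℝ)
    (hz : ∀ (z : V → ℝ) (x : V), z x = ∑ i, (z ⬝ᵥ u i) * u i x)
    (z : V → ℝ) :
    z ⬝ᵥ z = ∑ i, (z ⬝ᵥ u i) ^ 2 := by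
  have h := quad_expand' u hz 1 (fun _ => 1) (fun i => by simp) z
  simpa using h

lemma quad_BtB' {E V : Type*} [Fintype E] [Fintype V]
    (B : Matrix E V ℝ) (y : V → ℝ) :
    y ⬝ᵥ (Bᵀ * B).mulVec y = ∑ e, (B.mulVec y e) ^ 2 := by
  rw [← Matrix.mulVec_mulVec, Matrix.dotProduct_mulVec, Matrix.vecMul_transpose]
  simp [dotProduct, sq]

lemma mulVec_inc' {E V : Type*} [Fintype V] [DecidableEq V]
    (a b : E → V) (η : E → ℝ) (B : Matrix E V ℝ)
    (hB : ∀ e v, B e v = (if v = b e then 1 else 0) - η e * (if v = a e then 1 else 0))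
    (y : V → ℝ) (e : E) :
    B.mulVec y e = y (b e) - η e * y (a e) := by
  simp only [Matrix.mulVec, dotProduct, hB, sub_mul, ite_mul, one_mul, zero_mul, mul_assoc]
  rw [Finset.sum_sub_distrib]
  simp [Finset.sum_ite_eq', Finset.mul_sum]

lemma quad_double' {V : Type*} [Fintype V]
    (A : Matrix V V ℝ) (z : V → ℝ) :
    z ⬝ᵥ A.mulVec z = ∑ u, ∑ v, z u * A u v * z v := by
  simp [dotProduct, Matrix.mulVec, Finset.mul_sum, mul_assoc, mul_comm, mul_left_comm]

end Helpers

set_option maxHeartbeats 4000000 in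
/-- Let `G` be a `β`-balanced lossy flow graph whose smoothed graph has
normalized Laplacian `N_Ḡ` with second-smallest eigenvalue `lam2 ≤ 1`, let
`d_G ≤ d ≤ c·d_G` (`c ≥ 1`), and suppose `β ≤ lam2/(40c)`. Then for any `ε ∈ [0,1]`, the
spectral gap of `M = D^{-1/2}L_G D^{-1/2} + ε·I` satisfies `λ₂(M) - λ₁(M) ≥ lam2/(4c)`. -/
theorem stmt_9 {V E : Type*} [Fintype V] [Fintype E] [DecidableEq V]
    (a b : E → V) (hab : ∀ e, a e ≠ b e)
    (β : ℝ) (hβ0 : 0 ≤ β) (hβ1 : β ≤ 1)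
    (η : E → ℝ) (hη : ∀ e, 1 ≤ η e ∧ η e ≤ 1 + β)
    (BG BS : Matrix E V ℝ)
    (hBG : ∀ e v, BG e v = (if v = b e then 1 else 0) - η e * (if v = a e then 1 else 0))
    (hBS : ∀ e v, BS e v = (if v = b e then 1 else 0) - (if v = a e then 1 else 0))
    (LG LS : Matrix V V ℝ) (hLG : LG = BGᵀ * BG) (hLS : LS = BSᵀ * BS)
    (hdSpos : ∀ v, 0 < LS v v)
    (NS : Matrix V V ℝ)
    (hNS : ∀ u v, NS u v = LS u v / (Real.sqrt (LS u u) * Real.sqrt (LS v v)))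
    (hcard : 2 ≤ Fintype.card V)
    (lamS : Fin (Fintype.card V) → ℝ) (uS : Fin (Fintype.card V) → V → ℝ)
    (hmonoS : Monotone lamS)
    (heigS : ∀ i, NS.mulVec (uS i) = lamS i • uS i)
    (horthS : ∀ i j, uS i ⬝ᵥ uS j = if i = j then (1 : ℝ) else 0)
    (lam2 : ℝ) (hlam2 : lam2 = lamS ⟨1, by omega⟩) (hup : lam2 ≤ 1)
    (c : ℝ) (hc : 1 ≤ c)
    (hbal : β ≤ lam2 / (40 * c))
    (d : V → ℝ) (hd : ∀ u, LG u u ≤ d u ∧ d u ≤ c * LG u u)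
    (ε : ℝ) (hε0 : 0 ≤ ε) (hε1 : ε ≤ 1)
    (M : Matrix V V ℝ)
    (hM : ∀ u v, M u v = LG u v / (Real.sqrt (d u) * Real.sqrt (d v)) +
      (if u = v then ε else 0))
    (lamM : Fin (Fintype.card V) → ℝ) (uM : Fin (Fintype.card V) → V → ℝ)
    (hmonoM : Monotone lamM)
    (heigM : ∀ i, M.mulVec (uM i) = lamM i • uM i)
    (horthM : ∀ i j, uM i ⬝ᵥ uM j = if i = j then (1 : ℝ) else 0) :
    lam2 / (4 * c) ≤ lamM ⟨1, by omega⟩ - lamM ⟨0, by omega⟩ := by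
  classical
  have hc0 : (0:ℝ) < c := lt_of_lt_of_le one_pos hc
  have hlam2nn : 0 ≤ lam2 := by
    by_contra h
    push_neg at h
    have : lam2 / (40 * c) < 0 := div_neg_of_neg_of_pos h (by linarith)
    linarith [le_trans hβ0 hbal]
  have hbal' : β * (40 * c) ≤ lam2 := by
    rw [le_div_iff₀ (by linarith : (0:ℝ) < 40 * c)] at hbal; linarith
  have hβ40 : β ≤ 1/40 := by nlinarith
  -- diagonal entries of LS and LG
  have hBS1 : ∀ e v, BS e v = (if v = b e then 1 else 0) - (fun _ => (1:ℝ)) e *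
      (if v = a e then 1 else 0) := by
    intro e v; rw [hBS]; simp
  have hLSd : ∀ v, LS v v =
      ∑ e, ((if v = b e then (1:ℝ) else 0) + (if v = a e then 1 else 0)) := by
    intro v
    rw [hLS]
    have : (BSᵀ * BS) v v = ∑ e, BS e v * BS e v := by
      simp [Matrix.mul_apply, Matrix.transpose_apply]
    rw [this]
    refine Finset.sum_congr rfl fun e _ => ?_
    rw [hBS]
    have hne : b e ≠ a e := Ne.symm (hab e)
    rcases eq_or_ne v (b e) with h1 | h1 <;> rcases eq_or_ne v (a e) with h2 | h2
    · exact absurd (h2.symm.trans h1) (hab e)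
    · simp [h1, hne]
    · simp [h2, hab e]
    · simp [h1, h2]
  have hLGd : ∀ v, LG v v =
      ∑ e, ((if v = b e then (1:ℝ) else 0) + η e ^ 2 * (if v = a e then 1 else 0)) := by
    intro v
    rw [hLG]
    have : (BGᵀ * BG) v v = ∑ e, BG e v * BG e v := by
      simp [Matrix.mul_apply, Matrix.transpose_apply]
    rw [this]
    refine Finset.sum_congr rfl fun e _ => ?_
    rw [hBG]
    have hne : b e ≠ a e := Ne.symm (hab e)
    rcases eq_or_ne v (b e) with h1 | h1 <;> rcases eq_or_ne v (a e) with h2 | h2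
    · exact absurd (h2.symm.trans h1) (hab e)
    · simp [h1, hne]
    · simp [h2, hab e]; ring
    · simp [h1, h2]
  have hSG : ∀ v, LS v v ≤ LG v v := by
    intro v; rw [hLSd, hLGd]
    refine Finset.sum_le_sum fun e _ => ?_
    have h1 := (hη e).1
    have h5 : (1:ℝ) ≤ η e ^ 2 := by nlinarith
    have hne : b e ≠ a e := Ne.symm (hab e)
    rcases eq_or_ne v (b e) with h3 | h3 <;> rcases eq_or_ne v (a e) with h4 | h4
    · exact absurd (h4.symm.trans h3) (hab e)
    · simp [h3, hne]
    · simp [h4, hab e]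
      rw [le_abs]; left; linarith
    · simp [h3, h4]
  have hGS : ∀ v, LG v v ≤ (1+β)^2 * LS v v := by
    intro v; rw [hLSd, hLGd, Finset.mul_sum]
    refine Finset.sum_le_sum fun e _ => ?_
    have h1 := (hη e).1
    have h2 := (hη e).2
    have hb2 : (1:ℝ) ≤ (1+β)^2 := by nlinarith
    have ha2 : η e ^ 2 ≤ (1+β)^2 := by nlinarith
    have hne : b e ≠ a e := Ne.symm (hab e)
    rcases eq_or_ne v (b e) with h3 | h3 <;> rcases eq_or_ne v (a e) with h4 | h4
    · exact absurd (h4.symm.trans h3) (hab e)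
    · simp [h3, hne]
      rw [le_abs]; left; linarith
    · simp [h4, hab e]; nlinarith
    · simp [h3, h4]
  have hdpos : ∀ v, 0 < d v := fun v =>
    lt_of_lt_of_le (lt_of_lt_of_le (hdSpos v) (hSG v)) (hd v).1
  have hsd : ∀ v, Real.sqrt (d v) ≠ 0 := fun v =>
    ne_of_gt (Real.sqrt_pos.mpr (hdpos v))
  have hsS : ∀ v, (0:ℝ) < Real.sqrt (LS v v) := fun v => Real.sqrt_pos.mpr (hdSpos v)
  -- quadratic form identity for M
  have hMq : ∀ x : V → ℝ, x ⬝ᵥ M.mulVec x =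
      (fun v => x v / Real.sqrt (d v)) ⬝ᵥ LG.mulVec (fun v => x v / Real.sqrt (d v)) +
        ε * (x ⬝ᵥ x) := by
    intro x
    rw [quad_double' M x, quad_double' LG (fun v => x v / Real.sqrt (d v))]
    have hterm : ∀ u v : V, x u * M u v * x v
        = x u / Real.sqrt (d u) * LG u v * (x v / Real.sqrt (d v))
          + (if u = v then ε * (x u * x v) else 0) := by
      intro u v
      rw [hM u v]
      rcases eq_or_ne u v with h | h
      · subst h
        have h1 := hsd u
        field_simp
        simp only [if_true]; ring
      · have h1 := hsd u
        have h2 := hsd v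
        simp only [h, if_false, add_zero]
        field_simp
    calc ∑ u, ∑ v, x u * M u v * x v
        = ∑ u, ∑ v, (x u / Real.sqrt (d u) * LG u v * (x v / Real.sqrt (d v))
            + (if u = v then ε * (x u * x v) else 0)) :=
          Finset.sum_congr rfl fun u _ => Finset.sum_congr rfl fun v _ => hterm u v
      _ = (∑ u, ∑ v, x u / Real.sqrt (d u) * LG u v * (x v / Real.sqrt (d v)))
            + ∑ u : V, ∑ v : V, (if u = v then ε * (x u * x v) else 0) := by
          rw [← Finset.sum_add_distrib]
          exact Finset.sum_congr rfl fun u _ => Finset.sum_add_distrib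
      _ = (∑ u, ∑ v, x u / Real.sqrt (d u) * LG u v * (x v / Real.sqrt (d v)))
            + ε * (x ⬝ᵥ x) := by
          congr 1
          simp [Finset.sum_ite_eq, dotProduct, Finset.mul_sum]
  -- the constraint vector
  set w : V → ℝ := fun v => Real.sqrt (LS v v) / Real.sqrt (d v) * uS ⟨0, by omega⟩ v with hw
  -- key Rayleigh-quotient estimate
  have key : ∀ x : V → ℝ, x ⬝ᵥ w = 0 →
      (lam2/(2*c) + ε) * (x ⬝ᵥ x) ≤ x ⬝ᵥ M.mulVec x := by
    intro x hxw
    have hexpS := ortho_expand' uS horthS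
    set y : V → ℝ := fun v => x v / Real.sqrt (d v) with hy
    set z : V → ℝ := fun v => Real.sqrt (LS v v) * y v with hzdef
    set p : ℝ := ∑ v, LS v v * y v ^ 2 with hp
    have hLSnn : ∀ v, (0:ℝ) ≤ LS v v := fun v => le_of_lt (hdSpos v)
    have hz0 : z ⬝ᵥ uS ⟨0, by omega⟩ = 0 := by
      rw [← hxw]
      simp only [dotProduct, hw, hzdef, hy]
      exact Finset.sum_congr rfl fun v _ => by ring
    have hzz : z ⬝ᵥ z = p := by
      simp only [dotProduct, hzdef, hp]
      refine Finset.sum_congr rfl fun v _ => ?_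
      rw [show Real.sqrt (LS v v) * y v * (Real.sqrt (LS v v) * y v)
          = Real.sqrt (LS v v) * Real.sqrt (LS v v) * y v ^ 2 by ring,
        Real.mul_self_sqrt (hLSnn v)]
    have hqSNS : y ⬝ᵥ LS.mulVec y = z ⬝ᵥ NS.mulVec z := by
      rw [quad_double', quad_double']
      refine Finset.sum_congr rfl fun u _ => Finset.sum_congr rfl fun v _ => ?_
      rw [hNS u v]
      have h1 := (hsS u).ne'
      have h2 := (hsS v).ne'
      simp only [hzdef]
      field_simp
    have hNSlow : lam2 * p ≤ z ⬝ᵥ NS.mulVec z := by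
      rw [quad_expand' uS hexpS NS lamS heigS z]
      have hnorm := norm_expand' uS hexpS z
      rw [← hzz, hnorm, Finset.mul_sum]
      refine Finset.sum_le_sum fun i _ => ?_
      by_cases hi : i = ⟨0, by omega⟩
      · subst hi; rw [hz0]; simp
      · have hiv : (⟨1, by omega⟩ : Fin (Fintype.card V)) ≤ i := by
          have h1 : i.val ≠ 0 := fun h => hi (Fin.ext h)
          have h2 : (1:ℕ) ≤ i.val := by omega
          exact Fin.le_def.mpr (by simpa using h2)
        have := hmonoS hiv
        rw [hlam2]
        exact mul_le_mul_of_nonneg_right this (sq_nonneg _)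
    have hqSform : y ⬝ᵥ LS.mulVec y = ∑ e, (y (b e) - y (a e)) ^ 2 := by
      rw [hLS, quad_BtB']
      refine Finset.sum_congr rfl fun e _ => ?_
      rw [mulVec_inc' a b (fun _ => 1) BS hBS1 y e]
      norm_num
    have hqGform : y ⬝ᵥ LG.mulVec y = ∑ e, (y (b e) - η e * y (a e)) ^ 2 := by
      rw [hLG, quad_BtB']
      exact Finset.sum_congr rfl fun e _ => by rw [mulVec_inc' a b η BG hBG y e]
    have hpform : p = ∑ e, (y (a e) ^ 2 + y (b e) ^ 2) := by
      rw [hp]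
      calc ∑ v, LS v v * y v ^ 2
          = ∑ v, ∑ e, ((if v = b e then (1:ℝ) else 0) * y v ^ 2
              + (if v = a e then 1 else 0) * y v ^ 2) := by
            refine Finset.sum_congr rfl fun v _ => ?_
            rw [hLSd v, Finset.sum_mul]
            exact Finset.sum_congr rfl fun e _ => by ring
        _ = ∑ e, ∑ v, ((if v = b e then (1:ℝ) else 0) * y v ^ 2
              + (if v = a e then 1 else 0) * y v ^ 2) := Finset.sum_comm
        _ = ∑ e, (y (a e) ^ 2 + y (b e) ^ 2) := by
            refine Finset.sum_congr rfl fun e _ => ?_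
            rw [Finset.sum_add_distrib]
            simp [Finset.sum_ite_eq', add_comm]
    have hpnn : 0 ≤ p := by
      rw [hp]; exact Finset.sum_nonneg fun v _ => mul_nonneg (hLSnn v) (sq_nonneg _)
    have hTnn : (0:ℝ) ≤ ∑ e, ((η e - 1) * y (a e)) ^ 2 :=
      Finset.sum_nonneg fun e _ => sq_nonneg _
    have hqSnn : 0 ≤ y ⬝ᵥ LS.mulVec y := by
      rw [hqSform]; exact Finset.sum_nonneg fun e _ => sq_nonneg _
    have hT : ∑ e, ((η e - 1) * y (a e)) ^ 2 ≤ β ^ 2 * p := by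
      rw [hpform, Finset.mul_sum]
      refine Finset.sum_le_sum fun e _ => ?_
      have h1 := (hη e).1
      have h2 := (hη e).2
      have h3 : (η e - 1) ^ 2 ≤ β ^ 2 := by nlinarith
      calc ((η e - 1) * y (a e)) ^ 2 = (η e - 1) ^ 2 * y (a e) ^ 2 := by ring
        _ ≤ β ^ 2 * y (a e) ^ 2 := mul_le_mul_of_nonneg_right h3 (sq_nonneg _)
        _ ≤ β ^ 2 * (y (a e) ^ 2 + y (b e) ^ 2) := by
            nlinarith [sq_nonneg (y (b e)), sq_nonneg β]
    have hqS2p : y ⬝ᵥ LS.mulVec y ≤ 2 * p := by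
      rw [hqSform, hpform, Finset.mul_sum]
      refine Finset.sum_le_sum fun e _ => ?_
      nlinarith [sq_nonneg (y (b e) + y (a e))]
    have hCS : ∑ e, (y (b e) - y (a e)) * ((η e - 1) * y (a e))
        ≤ Real.sqrt (y ⬝ᵥ LS.mulVec y) * Real.sqrt (∑ e, ((η e - 1) * y (a e)) ^ 2) := by
      have h := Finset.sum_mul_sq_le_sq_mul_sq Finset.univ
        (fun e => y (b e) - y (a e)) (fun e => (η e - 1) * y (a e))
      have h2 : (∑ e, (y (b e) - y (a e)) * ((η e - 1) * y (a e))) ^ 2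
          ≤ (y ⬝ᵥ LS.mulVec y) * ∑ e, ((η e - 1) * y (a e)) ^ 2 := by
        rw [hqSform]; exact h
      calc ∑ e, (y (b e) - y (a e)) * ((η e - 1) * y (a e))
          ≤ |∑ e, (y (b e) - y (a e)) * ((η e - 1) * y (a e))| := le_abs_self _
        _ = Real.sqrt ((∑ e, (y (b e) - y (a e)) * ((η e - 1) * y (a e))) ^ 2) :=
            (Real.sqrt_sq_eq_abs _).symm
        _ ≤ Real.sqrt ((y ⬝ᵥ LS.mulVec y) * ∑ e, ((η e - 1) * y (a e)) ^ 2) :=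
            Real.sqrt_le_sqrt h2
        _ = _ := Real.sqrt_mul hqSnn _
    have hqGlow : (y ⬝ᵥ LS.mulVec y) + (∑ e, ((η e - 1) * y (a e)) ^ 2)
        - 2 * (Real.sqrt (y ⬝ᵥ LS.mulVec y) * Real.sqrt (∑ e, ((η e - 1) * y (a e)) ^ 2))
        ≤ y ⬝ᵥ LG.mulVec y := by
      rw [hqGform]
      have hterm : ∀ e : E, (y (b e) - η e * y (a e)) ^ 2
          = (y (b e) - y (a e)) ^ 2 + ((η e - 1) * y (a e)) ^ 2
            - 2 * ((y (b e) - y (a e)) * ((η e - 1) * y (a e))) := fun e => by ring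
      rw [Finset.sum_congr rfl fun e _ => hterm e, Finset.sum_sub_distrib,
        Finset.sum_add_distrib, ← hqSform, ← Finset.mul_sum]
      linarith [hCS]
    have hsT : Real.sqrt (∑ e, ((η e - 1) * y (a e)) ^ 2) ≤ β * Real.sqrt p := by
      have h := Real.sqrt_le_sqrt hT
      rwa [Real.sqrt_mul (sq_nonneg β), Real.sqrt_sq hβ0] at h
    have hsqS : Real.sqrt (y ⬝ᵥ LS.mulVec y) ≤ Real.sqrt 2 * Real.sqrt p := by
      have h := Real.sqrt_le_sqrt hqS2p
      rwa [Real.sqrt_mul (by norm_num : (0:ℝ) ≤ 2)] at h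
    have hsp : Real.sqrt p * Real.sqrt p = p := Real.mul_self_sqrt hpnn
    have hs2 : Real.sqrt 2 ≤ 1.5 := by
      rw [show (1.5:ℝ) = Real.sqrt (1.5 ^ 2) from (Real.sqrt_sq (by norm_num)).symm]
      exact Real.sqrt_le_sqrt (by norm_num)
    have hcross : Real.sqrt (y ⬝ᵥ LS.mulVec y) * Real.sqrt (∑ e, ((η e - 1) * y (a e)) ^ 2)
        ≤ 1.5 * β * p := by
      calc Real.sqrt (y ⬝ᵥ LS.mulVec y) * Real.sqrt (∑ e, ((η e - 1) * y (a e)) ^ 2)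
          ≤ (Real.sqrt 2 * Real.sqrt p) * (β * Real.sqrt p) := by
            apply mul_le_mul hsqS hsT (Real.sqrt_nonneg _)
            exact mul_nonneg (Real.sqrt_nonneg 2) (Real.sqrt_nonneg p)
        _ = Real.sqrt 2 * β * (Real.sqrt p * Real.sqrt p) := by ring
        _ = Real.sqrt 2 * β * p := by rw [hsp]
        _ ≤ 1.5 * β * p := by
            nlinarith [mul_le_mul_of_nonneg_right hs2 (mul_nonneg hβ0 hpnn)]
    have hqGlow2 : lam2 * p - 3 * β * p ≤ y ⬝ᵥ LG.mulVec y := by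
      have h1 : lam2 * p ≤ y ⬝ᵥ LS.mulVec y := by rw [hqSNS]; exact hNSlow
      linarith [hqGlow, hcross, hTnn, h1]
    have hxx : x ⬝ᵥ x = ∑ v, d v * y v ^ 2 := by
      simp only [dotProduct, hy]
      refine Finset.sum_congr rfl fun v _ => ?_
      rw [div_pow, Real.sq_sqrt (hdpos v).le]
      field_simp [(hdpos v).ne']
    have hden : ∑ v, d v * y v ^ 2 ≤ c * (1 + β) ^ 2 * p := by
      rw [hp, Finset.mul_sum]
      refine Finset.sum_le_sum fun v _ => ?_
      have h1 := (hd v).2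
      have h2 := hGS v
      have h3 := sq_nonneg (y v)
      calc d v * y v ^ 2 ≤ (c * LG v v) * y v ^ 2 := mul_le_mul_of_nonneg_right h1 h3
        _ ≤ (c * ((1 + β) ^ 2 * LS v v)) * y v ^ 2 :=
            mul_le_mul_of_nonneg_right (mul_le_mul_of_nonneg_left h2 (le_of_lt hc0)) h3
        _ = c * (1 + β) ^ 2 * (LS v v * y v ^ 2) := by ring
    rw [hMq x, hxx]
    have hsc : lam2 * (1 + β) ^ 2 / 2 + 3 * β ≤ lam2 := by
      nlinarith [mul_le_mul_of_nonneg_left hβ40 hlam2nn,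
        mul_le_mul_of_nonneg_left hβ40 (mul_nonneg hlam2nn hβ0),
        mul_le_mul_of_nonneg_right hc hβ0, hbal', sq_nonneg β]
    have hmain : lam2 / (2 * c) * (∑ v, d v * y v ^ 2) ≤ y ⬝ᵥ LG.mulVec y := by
      calc lam2 / (2 * c) * (∑ v, d v * y v ^ 2)
          ≤ lam2 / (2 * c) * (c * (1 + β) ^ 2 * p) := by
            apply mul_le_mul_of_nonneg_left hden (by positivity)
        _ = (lam2 * (1 + β) ^ 2 / 2) * p := by field_simp
        _ ≤ lam2 * p - 3 * β * p := by nlinarith [mul_le_mul_of_nonneg_right hsc hpnn]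
        _ ≤ y ⬝ᵥ LG.mulVec y := hqGlow2
    have hS : (lam2 / (2 * c) + ε) * (∑ v, d v * y v ^ 2)
        = lam2 / (2 * c) * (∑ v, d v * y v ^ 2) + ε * (∑ v, d v * y v ^ 2) := by ring
    rw [hS]
    linarith [hmain]
  -- expansions
  have hexpM := ortho_expand' uM horthM
  have hexpS := ortho_expand' uS horthS
  -- lower bound on lamM 1
  have h1 : lam2/(2*c) + ε ≤ lamM ⟨1, by omega⟩ := by
    set i0 : Fin (Fintype.card V) := ⟨0, by omega⟩ with hi0
    set i1 : Fin (Fintype.card V) := ⟨1, by omega⟩ with hi1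
    have hi01 : i0 ≠ i1 := by rw [hi0, hi1]; intro h; exact absurd (Fin.mk.injEq .. ▸ h) (by norm_num)
    have hmon01 : lamM i0 ≤ lamM i1 := hmonoM (by rw [hi0, hi1]; exact Fin.mk_le_mk.mpr (by norm_num))
    have h00 : uM i0 ⬝ᵥ uM i0 = 1 := by rw [horthM]; simp
    have h11 : uM i1 ⬝ᵥ uM i1 = 1 := by rw [horthM]; simp
    have h01 : uM i0 ⬝ᵥ uM i1 = 0 := by rw [horthM]; simp [hi01]
    have h10 : uM i1 ⬝ᵥ uM i0 = 0 := by rw [horthM]; simp [hi01.symm]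
    by_cases hs1 : uM i1 ⬝ᵥ w = 0
    · have hk := key (uM i1) hs1
      have hq : uM i1 ⬝ᵥ M.mulVec (uM i1) = lamM i1 := by
        rw [heigM, dotProduct_smul, h11, smul_eq_mul, mul_one]
      rw [h11, hq, mul_one] at hk
      exact hk
    · set s0 : ℝ := uM i0 ⬝ᵥ w with hs0def
      set s1 : ℝ := uM i1 ⬝ᵥ w with hs1def
      set x : V → ℝ := s1 • uM i0 - s0 • uM i1 with hx
      have hxw : x ⬝ᵥ w = 0 := by
        rw [hx, sub_dotProduct, smul_dotProduct, smul_dotProduct, ← hs0def, ← hs1def,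
          smul_eq_mul, smul_eq_mul]
        ring
      have hxx : x ⬝ᵥ x = s1^2 + s0^2 := by
        rw [hx]
        simp only [sub_dotProduct, dotProduct_sub, smul_dotProduct, dotProduct_smul,
          smul_eq_mul, h00, h11, h01, h10]
        ring
      have hMx : M.mulVec x = s1 • (lamM i0 • uM i0) - s0 • (lamM i1 • uM i1) := by
        rw [hx, Matrix.mulVec_sub, Matrix.mulVec_smul, Matrix.mulVec_smul, heigM, heigM]
      have hq : x ⬝ᵥ M.mulVec x = s1^2 * lamM i0 + s0^2 * lamM i1 := by
        rw [hMx, hx]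
        simp only [sub_dotProduct, dotProduct_sub, smul_dotProduct, dotProduct_smul,
          smul_eq_mul, h00, h11, h01, h10]
        ring
      have hk := key x hxw
      rw [hxx, hq] at hk
      have hs1sq : 0 < s1^2 := by positivity
      have hSpos : 0 < s1^2 + s0^2 := by nlinarith [sq_nonneg s0]
      have hk2 : (lam2/(2*c) + ε) * (s1^2 + s0^2) ≤ lamM i1 * (s1^2 + s0^2) := by
        nlinarith [mul_le_mul_of_nonneg_left hmon01 (sq_nonneg s1)]
      exact le_of_mul_le_mul_right hk2 hSpos
  -- upper bound on lamM 0
  have h0 : lamM ⟨0, by omega⟩ ≤ ε + β^2/2 := by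
    have hnV : Nonempty V := Fintype.card_pos_iff.mp (by omega)
    set x0 : V → ℝ := fun v => Real.sqrt (d v) with hx0
    have hS : x0 ⬝ᵥ x0 = ∑ v, d v := by
      simp only [dotProduct, hx0]
      exact Finset.sum_congr rfl fun v _ => Real.mul_self_sqrt (hdpos v).le
    have hSpos : 0 < ∑ v, d v :=
      Finset.sum_pos (fun v _ => hdpos v) Finset.univ_nonempty
    have hlow : lamM ⟨0, by omega⟩ * (∑ v, d v) ≤ x0 ⬝ᵥ M.mulVec x0 := by
      rw [quad_expand' uM hexpM M lamM heigM x0, ← hS, norm_expand' uM hexpM x0,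
        Finset.mul_sum]
      refine Finset.sum_le_sum fun i _ => ?_
      have hle : lamM ⟨0, by omega⟩ ≤ lamM i := hmonoM (Fin.le_def.mpr (Nat.zero_le _))
      exact mul_le_mul_of_nonneg_right hle (sq_nonneg _)
    have hyone : (fun v => x0 v / Real.sqrt (d v)) = fun _ => (1:ℝ) := by
      funext v; exact div_self (hsd v)
    have hq : x0 ⬝ᵥ M.mulVec x0
        = ((fun _ => (1:ℝ)) ⬝ᵥ LG.mulVec (fun _ => (1:ℝ))) + ε * (∑ v, d v) := by
      rw [hMq x0, hyone, hS]
    have hone : (fun _ => (1:ℝ)) ⬝ᵥ LG.mulVec (fun _ => (1:ℝ)) = ∑ e, ((1:ℝ) - η e)^2 := by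
      rw [hLG, quad_BtB']
      refine Finset.sum_congr rfl fun e _ => ?_
      rw [mulVec_inc' a b η BG hBG _ e]
      norm_num
    have honeb : ∑ e, ((1:ℝ) - η e)^2 ≤ β^2 * Fintype.card E := by
      calc ∑ e, ((1:ℝ) - η e)^2 ≤ ∑ _e : E, β^2 :=
            Finset.sum_le_sum fun e _ => by nlinarith [(hη e).1, (hη e).2]
        _ = β^2 * Fintype.card E := by
            simp [Finset.sum_const, nsmul_eq_mul, mul_comm]
    have hcardE : 2 * (Fintype.card E : ℝ) ≤ ∑ v, d v := by
      have hsum : ∑ v, LS v v = 2 * (Fintype.card E : ℝ) := by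
        calc ∑ v, LS v v
            = ∑ v, ∑ e, ((if v = b e then (1:ℝ) else 0) + (if v = a e then 1 else 0)) :=
              Finset.sum_congr rfl fun v _ => hLSd v
          _ = ∑ e : E, ∑ v, ((if v = b e then (1:ℝ) else 0) + (if v = a e then 1 else 0)) :=
              Finset.sum_comm
          _ = ∑ _e : E, (2:ℝ) := Finset.sum_congr rfl fun e _ => by
              rw [Finset.sum_add_distrib]; simp [Finset.sum_ite_eq']; norm_num
          _ = 2 * Fintype.card E := by
              simp [Finset.sum_const, nsmul_eq_mul, mul_comm]
      rw [← hsum]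
      exact Finset.sum_le_sum fun v _ => le_trans (hSG v) (hd v).1
    have hβE : β^2 * (Fintype.card E : ℝ) ≤ β^2/2 * (∑ v, d v) := by
      calc β^2 * (Fintype.card E : ℝ) = β^2/2 * (2 * (Fintype.card E : ℝ)) := by ring
        _ ≤ β^2/2 * (∑ v, d v) := mul_le_mul_of_nonneg_left hcardE (by positivity)
    have hfin : lamM ⟨0, by omega⟩ * (∑ v, d v) ≤ (ε + β^2/2) * (∑ v, d v) := by
      calc lamM ⟨0, by omega⟩ * (∑ v, d v) ≤ x0 ⬝ᵥ M.mulVec x0 := hlow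
        _ = (∑ e, ((1:ℝ) - η e)^2) + ε * (∑ v, d v) := by rw [hq, hone]
        _ ≤ β^2 * Fintype.card E + ε * (∑ v, d v) := by linarith [honeb]
        _ ≤ (ε + β^2/2) * (∑ v, d v) := by nlinarith [hβE]
    exact le_of_mul_le_mul_right hfin hSpos
  -- finish
  have hfin : β^2/2 ≤ lam2/(4*c) := by
    rw [div_le_div_iff₀ (by norm_num) (by linarith : (0:ℝ) < 4 * c)]
    nlinarith
  have heq : lam2/(2*c) - lam2/(4*c) = lam2/(4*c) := by
    field_simp; ring
  linarith
end
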